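/- Define a_j = (j!/2)^{1/(j-2)} for integers j ≥ 3. Then the sequence a_j/√j is nondecreasing: for all integers n ≥ j ≥ 3, a_j/√j ≤ a_n/√n. -/

import Mathlib

/-!
Write `p = j - 2` and `x = j! / 2`, so that `a_j = x ^ (1/p)` and `a_{j+1} = ((j+1) x) ^ (1/(p+1))`.
Comparing logarithms, the step `a_j / √j ≤ a_{j+1} / √(j+1)` is equivalent to
`x² (j+1)^(p(p-1)) ≤ j^(p(p+1))`, that is `(j!)² (j+1)^((j-2)(j-3)) ≤ 4 j^((j-1)(j-2))`.
This follows by induction on `j`, the inductive step reducing to `j (j+2) ≤ (j+1)²`.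
-/

open Real
open scoped Nat

theorem factorial_sq_mul_pow_le (k : ℕ) :
    (k + 3)! ^ 2 * (k + 4) ^ (k * (k + 1)) ≤ 4 * (k + 3) ^ ((k + 1) * (k + 2)) := by
  induction k with
  | zero => decide
  | succ k ih =>
    have hsq : (k + 3) * (k + 5) ≤ (k + 4) ^ 2 := by nlinarith
    refine le_of_mul_le_mul_right ?_ (pow_pos (by omega : 0 < k + 4) (k * (k + 1)))
    calc (k + 1 + 3)! ^ 2 * (k + 1 + 4) ^ ((k + 1) * (k + 1 + 1)) * (k + 4) ^ (k * (k + 1))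
        = (k + 4) ^ 2 * ((k + 3)! ^ 2 * (k + 4) ^ (k * (k + 1))) * (k + 5) ^ ((k + 1) * (k + 2)) := by
          rw [show k + 1 + 3 = (k + 3) + 1 by ring, Nat.factorial_succ]; ring
      _ ≤ (k + 4) ^ 2 * (4 * (k + 3) ^ ((k + 1) * (k + 2))) * (k + 5) ^ ((k + 1) * (k + 2)) := by
          gcongr
      _ = 4 * (k + 4) ^ 2 * ((k + 3) * (k + 5)) ^ ((k + 1) * (k + 2)) := by rw [mul_pow]; ring
      _ ≤ 4 * (k + 4) ^ 2 * ((k + 4) ^ 2) ^ ((k + 1) * (k + 2)) := by gcongr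
      _ = 4 * (k + 1 + 3) ^ ((k + 1 + 1) * (k + 1 + 2)) * (k + 4) ^ (k * (k + 1)) := by
          rw [← pow_mul, mul_assoc, ← pow_add, mul_assoc, ← pow_add]; ring_nf

theorem rpow_one_div_div_sqrt_le {x s t p : ℝ} (hx : 0 < x) (hs : 0 < s) (ht : 0 < t)
    (hp : 0 < p) (h : x ^ 2 * t ^ (p * (p - 1)) ≤ s ^ (p * (p + 1))) :
    x ^ (1 / p) / √s ≤ (t * x) ^ (1 / (p + 1)) / √t := by
  have hlog : 2 * log x + p * (p - 1) * log t ≤ p * (p + 1) * log s := by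
    have := log_le_log (by positivity) h
    rwa [log_mul (by positivity) (by positivity), log_pow, log_rpow ht, log_rpow hs] at this
  rw [← log_le_log_iff (by positivity) (by positivity), log_div (by positivity) (by positivity),
    log_div (by positivity) (by positivity), log_rpow hx, log_rpow (by positivity),
    log_mul ht.ne' hx.ne', log_sqrt hs.le, log_sqrt ht.le, ← sub_nonneg]
  have hdiff : 1 / (p + 1) * (log t + log x) - log t / 2 - (1 / p * log x - log s / 2)
      = (p * (p + 1) * log s - 2 * log x - p * (p - 1) * log t) / (2 * p * (p + 1)) := by
    field_simp; ring
  rw [hdiff]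
  exact div_nonneg (by linarith) (by positivity)

noncomputable def factorialRoot (j : ℕ) : ℝ := ((j ! : ℝ) / 2) ^ ((1 : ℝ) / ((j : ℝ) - 2))

theorem factorialRoot_div_sqrt_le_succ (k : ℕ) :
    factorialRoot (k + 3) / √(k + 3 : ℕ) ≤ factorialRoot (k + 1 + 3) / √(k + 1 + 3 : ℕ) := by
  have hfac : ((k + 1 + 3)! : ℝ) / 2 = (k + 4) * ((k + 3)! / 2) := by
    rw [show k + 1 + 3 = k + 3 + 1 by ring, Nat.factorial_succ]; push_cast; ring
  have hnat : ((k + 3)! : ℝ) ^ 2 * ((k : ℝ) + 4) ^ (k * (k + 1))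
      ≤ 4 * ((k : ℝ) + 3) ^ ((k + 1) * (k + 2)) := by
    exact_mod_cast factorial_sq_mul_pow_le k
  have hineq : (((k + 3)! : ℝ) / 2) ^ 2 * ((k : ℝ) + 4) ^ ((k + 1 : ℝ) * (k + 1 - 1))
      ≤ ((k : ℝ) + 3) ^ ((k + 1 : ℝ) * (k + 1 + 1)) := by
    rw [show (k + 1 : ℝ) * (k + 1 - 1) = ((k * (k + 1) : ℕ) : ℝ) by push_cast; ring,
      show (k + 1 : ℝ) * (k + 1 + 1) = (((k + 1) * (k + 2) : ℕ) : ℝ) by push_cast; ring,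
      rpow_natCast, rpow_natCast, div_pow, div_mul_eq_mul_div, div_le_iff₀ (by norm_num)]
    linarith [hnat]
  unfold factorialRoot
  rw [hfac]
  push_cast
  rw [show (k : ℝ) + 3 - 2 = k + 1 by ring, show (k : ℝ) + 1 + 3 - 2 = k + 1 + 1 by ring,
    show (k : ℝ) + 1 + 3 = k + 4 by ring]
  exact rpow_one_div_div_sqrt_le (by positivity) (by positivity) (by positivity) (by positivity) hineq

theorem aj_div_sqrt_monotone (n j : ℕ) (hj : 3 ≤ j) (hjn : j ≤ n) :
    ((Nat.factorial j : ℝ) / 2) ^ ((1 : ℝ) / ((j : ℝ) - 2)) / Real.sqrt j ≤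
      ((Nat.factorial n : ℝ) / 2) ^ ((1 : ℝ) / ((n : ℝ) - 2)) / Real.sqrt n := by
  obtain ⟨a, rfl⟩ := Nat.exists_eq_add_of_le' hj
  obtain ⟨b, rfl⟩ := Nat.exists_eq_add_of_le' (hj.trans hjn)
  exact monotone_nat_of_le_succ factorialRoot_div_sqrt_le_succ (by omega : a ≤ b)
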